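/- arXiv:1411.0728 — 2 statements merged into one kernel-verified Lean document; each statement's English description precedes it below -/
import Mathlib

section
/- Let D ⊆ ℝ^m be a nonempty compact set, x ∈ ℝ^K, and g : ℝ^K × ℝ^m → ℝ satisfying: (A1) g is bounded on ℝ^K × D and g(·, z) is differentiable at x uniformly in z ∈ D with derivatives D_x g(x,z); (A2) z ↦ D_x g(x, z) is continuous on D and z ↦ g(x, z) is lower semicontinuous on D. Define V(y) := inf_{z∈D} g(y, z), P̃_D(x) := {z ∈ D : V(x) = g(x,z)}, and Y(x) := {D_x g(x,z) : z ∈ P̃_D(x)}. Then for every direction q ∈ ℝ^K the one-sided directional derivative D⁺V(x)(q) := lim_{h→0⁺} (V(x + h·q) − V(x))/h exists and D⁺V(x)(q) = min_{y ∈ Y(x)} ⟨y, q⟩ = min_{p ∈ D⁺V(x)} ⟨p, q⟩, where D⁺V(x) denotes the superdifferential of V at x. -/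
open Filter Topology
open scoped RealInnerProductSpace

/-!
For a minimiser `z` of `g x`, `V ≤ g · z` with equality at `x`, so `D_x g(x, z) ∈ D⁺V(x)` and the
upper Dini derivative of `V` in direction `q` is at most `⟪D_x g(x, z), q⟫`; this gives the bound
`L = min_{y ∈ Y(x)} ⟪y, q⟫` from above.

From below: the compact set `C` of `z ∈ D` with `⟪D_x g(x, z), q⟫ ≤ L - ε` misses the minimisers of
`g x`, so by lower semicontinuity `g x ≥ V x + η` on `C`. As `g (x + h q) → g x` uniformly on `D`,
near-minimisers of `g (x + h q)` eventually avoid `C`, and differentiating `g` at such a point gives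
`V (x + h q) - V x ≥ h (L - ε) - o(h)`.

Finally, along the ray `x + h q` the defining quotient of `D⁺V(x)` tends to `(L - ⟪p, q⟫) / ‖q‖`,
so `L ≤ ⟪p, q⟫` for every `p ∈ D⁺V(x)`.
-/

/-- The superdifferential `D⁺V(x)`: the set of `p` with
`limsup_{y→x} (V(y) − V(x) − ⟪p, y − x⟫)/‖y − x‖ ≤ 0`. -/
noncomputable def superDiff {K : ℕ} (V : EuclideanSpace ℝ (Fin K) → ℝ)
    (x : EuclideanSpace ℝ (Fin K)) : Set (EuclideanSpace ℝ (Fin K)) :=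
  {p | Filter.limsup
      (fun y => (((V y - V x - ⟪p, y - x⟫) / ‖y - x‖ : ℝ) : EReal)) (𝓝[≠] x)
    ≤ 0}

open Set

def HasUniformGradientAt {E Z : Type*} [NormedAddCommGroup E] [InnerProductSpace ℝ E]
    (g : E → Z → ℝ) (Dg : Z → E) (D : Set Z) (x : E) : Prop :=
  ∀ ε > 0, ∀ᶠ y in 𝓝 x, ∀ z ∈ D, |g y z - g x z - ⟪Dg z, y - x⟫| ≤ ε * ‖y - x‖

theorem LowerSemicontinuousOn.exists_add_le_of_lt {Z : Type*} [TopologicalSpace Z] {C : Set Z}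
    {f : Z → ℝ} {a : ℝ} (hC : IsCompact C) (hf : LowerSemicontinuousOn f C)
    (ha : ∀ z ∈ C, a < f z) : ∃ η > 0, ∀ z ∈ C, a + η ≤ f z := by
  rcases C.eq_empty_or_nonempty with rfl | hne
  · exact ⟨1, one_pos, by simp⟩
  obtain ⟨z₀, hz₀, hmin⟩ := hf.exists_isMinOn hne hC
  exact ⟨f z₀ - a, sub_pos.2 (ha z₀ hz₀), fun z hz => by linarith [isMinOn_iff.1 hmin z hz]⟩

theorem IsCompact.exists_isMinOn_setOf_eq {Z : Type*} [TopologicalSpace Z] {D : Set Z}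
    {f φ : Z → ℝ} {v : ℝ} (hD : IsCompact D) (hne : D.Nonempty) (hf : LowerSemicontinuousOn f D)
    (hv : IsGLB (f '' D) v) (hφ : ContinuousOn φ D) :
    ∃ z₀ ∈ {z ∈ D | v = f z}, IsMinOn φ {z ∈ D | v = f z} z₀ := by
  have hsub : {z ∈ D | v = f z} = D ∩ f ⁻¹' Iic v := by
    ext z
    exact ⟨fun ⟨hz, hzv⟩ => ⟨hz, hzv.ge⟩,
      fun ⟨hz, hzv⟩ => ⟨hz, le_antisymm (hv.1 (mem_image_of_mem f hz)) hzv⟩⟩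
  obtain ⟨z₁, hz₁, hmin⟩ := hf.exists_isMinOn hne hD
  have hz₁v : v = f z₁ := hv.unique (hmin.isGLB hz₁)
  rw [hsub]
  exact (hf.isCompact_inter_preimage_Iic hD v).exists_isMinOn
    ⟨z₁, hz₁, hz₁v.ge⟩ (hφ.mono inter_subset_left)

theorem TendstoUniformlyOn.eventually_le_add_of_le_add {ι Z : Type*} {F : ι → Z → ℝ}
    {f : Z → ℝ} {l : Filter ι} {D : Set Z} {V : ι → ℝ} {z₀ : Z}
    (hF : TendstoUniformlyOn F f l D) (hz₀ : z₀ ∈ D) (hV : ∀ i, V i ≤ F i z₀)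
    {η : ℝ} (hη : 0 < η) :
    ∀ᶠ i in l, ∀ z ∈ D, F i z ≤ V i + η → f z ≤ f z₀ + 3 * η := by
  filter_upwards [Metric.tendstoUniformlyOn_iff.1 hF η hη] with i hi z hz hzi
  have h₁ := (abs_lt.1 (hi z hz)).2
  have h₂ := (abs_lt.1 (hi z₀ hz₀)).1
  linarith [hV i]

theorem tendsto_add_smul_nhdsGT {E : Type*} [NormedAddCommGroup E] [NormedSpace ℝ E]
    (x q : E) : Tendsto (fun h : ℝ => x + h • q) (𝓝[>] 0) (𝓝 x) := by
  have hcont : Continuous fun h : ℝ => x + h • q := by fun_prop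
  simpa using (hcont.tendsto 0).mono_left nhdsWithin_le_nhds

theorem tendsto_add_smul_nhdsNE {E : Type*} [NormedAddCommGroup E] [NormedSpace ℝ E]
    (x : E) {q : E} (hq : q ≠ 0) : Tendsto (fun h : ℝ => x + h • q) (𝓝[>] 0) (𝓝[≠] x) := by
  refine tendsto_nhdsWithin_iff.2 ⟨tendsto_add_smul_nhdsGT x q, ?_⟩
  filter_upwards [self_mem_nhdsWithin] with h (hh : 0 < h)
  simpa [mem_compl_iff, mem_singleton_iff] using ⟨hh.ne', hq⟩

namespace HasUniformGradientAt

variable {E Z : Type*} [NormedAddCommGroup E] [InnerProductSpace ℝ E]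
  {g : E → Z → ℝ} {Dg : Z → E} {D : Set Z} {x : E} {V : E → ℝ}

theorem tendstoUniformlyOn (hg : HasUniformGradientAt g Dg D x) {C : ℝ}
    (hC : ∀ z ∈ D, ‖Dg z‖ ≤ C) : TendstoUniformlyOn g (g x) (𝓝 x) D := by
  refine Metric.tendstoUniformlyOn_iff.2 fun ε hε => ?_
  have hball : Metric.ball x (ε / (|C| + 2)) ∈ 𝓝 x := Metric.ball_mem_nhds x (by positivity)
  filter_upwards [hg 1 one_pos, hball] with y hy hyx z hz
  rw [Metric.mem_ball, dist_eq_norm, lt_div_iff₀ (by positivity)] at hyx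
  have hinner : |⟪Dg z, y - x⟫| ≤ |C| * ‖y - x‖ :=
    (abs_real_inner_le_norm _ _).trans
      (mul_le_mul_of_nonneg_right ((hC z hz).trans (le_abs_self C)) (norm_nonneg _))
  have hnorm : 0 ≤ ‖y - x‖ := norm_nonneg _
  rw [Real.dist_eq, abs_sub_comm]
  calc |g y z - g x z|
      ≤ |g y z - g x z - ⟪Dg z, y - x⟫| + |⟪Dg z, y - x⟫| := by
        simpa using abs_add_le (g y z - g x z - ⟪Dg z, y - x⟫) ⟪Dg z, y - x⟫
    _ ≤ 1 * ‖y - x‖ + |C| * ‖y - x‖ := add_le_add (hy z hz) hinner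
    _ < ε := by nlinarith

theorem eventually_directional (hg : HasUniformGradientAt g Dg D x) (q : E) {ε : ℝ}
    (hε : 0 < ε) : ∀ᶠ h in 𝓝[>] (0 : ℝ), ∀ z ∈ D,
      |g (x + h • q) z - g x z - h * ⟪Dg z, q⟫| ≤ ε * h := by
  have hq : 0 < ‖q‖ + 1 := by positivity
  filter_upwards [(tendsto_add_smul_nhdsGT x q).eventually (hg (ε / (‖q‖ + 1)) (by positivity)),
    self_mem_nhdsWithin] with h hh (h0 : 0 < h) z hz
  have hz := hh z hz
  rw [add_sub_cancel_left, real_inner_smul_right, norm_smul, Real.norm_of_nonneg h0.le] at hz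
  refine hz.trans ?_
  rw [div_mul_eq_mul_div, div_le_iff₀ hq]
  nlinarith [norm_nonneg q]

theorem eventually_sub_sub_inner_le (hg : HasUniformGradientAt g Dg D x) {z : Z} (hz : z ∈ D)
    (hVg : ∀ y, V y ≤ g y z) (hVx : V x = g x z) {ε : ℝ} (hε : 0 < ε) :
    ∀ᶠ y in 𝓝 x, V y - V x - ⟪Dg z, y - x⟫ ≤ ε * ‖y - x‖ := by
  filter_upwards [hg ε hε] with y hy
  linarith [(abs_le.1 (hy z hz)).2, hVg y]

theorem eventually_div_le (hg : HasUniformGradientAt g Dg D x) {z : Z} (hz : z ∈ D)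
    (hVg : ∀ y, V y ≤ g y z) (hVx : V x = g x z) (q : E) {ε : ℝ} (hε : 0 < ε) :
    ∀ᶠ h in 𝓝[>] (0 : ℝ), (V (x + h • q) - V x) / h ≤ ⟪Dg z, q⟫ + ε := by
  filter_upwards [hg.eventually_directional q hε, self_mem_nhdsWithin] with h hh (h0 : 0 < h)
  rw [div_le_iff₀ h0]
  linarith [(abs_le.1 (hh z hz)).2, hVg (x + h • q)]

theorem eventually_le_div [TopologicalSpace Z] (hg : HasUniformGradientAt g Dg D x)
    (hD : IsCompact D) (hDg : ContinuousOn Dg D) (hgx : LowerSemicontinuousOn (g x) D)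
    (hV : ∀ y, IsGLB (g y '' D) (V y)) {z₀ : Z} (hz₀ : z₀ ∈ D) (hVx : V x = g x z₀) {q : E}
    {L : ℝ} (hL : ∀ z ∈ D, V x = g x z → L ≤ ⟪Dg z, q⟫) {ε : ℝ} (hε : 0 < ε) :
    ∀ᶠ h in 𝓝[>] (0 : ℝ), L - ε ≤ (V (x + h • q) - V x) / h := by
  obtain ⟨ε', hε', rfl⟩ : ∃ ε' > 0, ε = 3 * ε' := ⟨ε / 3, by positivity, by ring⟩
  have hDgq : ContinuousOn (fun z => ⟪Dg z, q⟫) D := hDg.inner continuousOn_const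
  set C := D ∩ (fun z => ⟪Dg z, q⟫) ⁻¹' Iic (L - ε')
  obtain ⟨η, hη, hgap⟩ : ∃ η > 0, ∀ z ∈ C, V x + η ≤ g x z := by
    refine (hgx.mono inter_subset_left).exists_add_le_of_lt
      (hDgq.lowerSemicontinuousOn.isCompact_inter_preimage_Iic hD _) fun z hz => ?_
    refine lt_of_le_of_ne ((hV x).1 (mem_image_of_mem _ hz.1)) fun hzV => ?_
    have h₁ := hL z hz.1 hzV
    have h₂ : ⟪Dg z, q⟫ ≤ L - ε' := hz.2
    linarith
  obtain ⟨B, hB⟩ := hD.exists_bound_of_continuousOn hDg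
  have hnear := (tendsto_add_smul_nhdsGT x q).eventually
    ((hg.tendstoUniformlyOn hB).eventually_le_add_of_le_add hz₀
      (fun y => (hV y).1 (mem_image_of_mem _ hz₀)) (by positivity : 0 < η / 4))
  filter_upwards [hnear, hg.eventually_directional q hε', self_mem_nhdsWithin]
    with h hnear hdir (h0 : 0 < h)
  obtain ⟨_, ⟨zh, hzh, rfl⟩, -, hlt⟩ := (hV (x + h • q)).exists_between
    (lt_add_of_pos_right _ (lt_min (by positivity : 0 < η / 4) (mul_pos h0 hε')))
  have hgood : L - ε' < ⟪Dg zh, q⟫ := by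
    by_contra hbad
    have hfar := hgap zh ⟨hzh, not_lt.1 hbad⟩
    have hclose := hnear zh hzh (by linarith [min_le_left (η / 4) (h * ε')])
    linarith
  have hmul : h * (L - ε') ≤ h * ⟪Dg zh, q⟫ := mul_le_mul_of_nonneg_left hgood.le h0.le
  rw [le_div_iff₀ h0]
  linarith [(abs_le.1 (hdir zh hzh)).1, min_le_right (η / 4) (h * ε'),
    (hV x).1 (mem_image_of_mem _ hzh)]

theorem tendsto_div [TopologicalSpace Z] (hg : HasUniformGradientAt g Dg D x)
    (hD : IsCompact D) (hDg : ContinuousOn Dg D) (hgx : LowerSemicontinuousOn (g x) D)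
    (hV : ∀ y, IsGLB (g y '' D) (V y)) {z₀ : Z} (hz₀ : z₀ ∈ D) (hVx : V x = g x z₀) (q : E)
    (hmin : ∀ z ∈ D, V x = g x z → ⟪Dg z₀, q⟫ ≤ ⟪Dg z, q⟫) :
    Tendsto (fun h : ℝ => (V (x + h • q) - V x) / h) (𝓝[>] 0) (𝓝 ⟪Dg z₀, q⟫) := by
  refine Metric.tendsto_nhds.2 fun ε hε => ?_
  filter_upwards [hg.eventually_div_le hz₀ (fun y => (hV y).1 (mem_image_of_mem _ hz₀)) hVx q
      (half_pos hε), hg.eventually_le_div hD hDg hgx hV hz₀ hVx hmin (half_pos hε)]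
    with h hup hlow
  rw [Real.dist_eq, abs_sub_lt_iff]
  constructor <;> linarith

end HasUniformGradientAt

section SuperDiff

variable {K : ℕ} {V : EuclideanSpace ℝ (Fin K) → ℝ} {x p : EuclideanSpace ℝ (Fin K)}

theorem mem_superDiff_of_eventually
    (hp : ∀ ε > 0, ∀ᶠ y in 𝓝 x, V y - V x - ⟪p, y - x⟫ ≤ ε * ‖y - x‖) :
    p ∈ superDiff V x := by
  refine EReal.le_of_forall_lt_iff_le.1 fun c hc => limsup_le_of_le (by isBoundedDefault) ?_
  have hc : (0 : ℝ) < c := by exact_mod_cast hc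
  filter_upwards [nhdsWithin_le_nhds (hp c hc)] with y hy
  exact EReal.coe_le_coe_iff.2 (div_le_of_le_mul₀ (norm_nonneg _) hc.le hy)

theorem le_inner_of_mem_superDiff (hp : p ∈ superDiff V x) {q : EuclideanSpace ℝ (Fin K)}
    {L : ℝ} (hL : Tendsto (fun h : ℝ => (V (x + h • q) - V x) / h) (𝓝[>] 0) (𝓝 L)) :
    L ≤ ⟪p, q⟫ := by
  rcases eq_or_ne q 0 with rfl | hq
  · have : L = 0 := tendsto_nhds_unique hL (by simp)
    simp [this]
  have hqpos : 0 < ‖q‖ := norm_pos_iff.2 hq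
  set u : EuclideanSpace ℝ (Fin K) → EReal :=
    fun y => (((V y - V x - ⟪p, y - x⟫) / ‖y - x‖ : ℝ) : EReal)
  have hray : Tendsto (fun h : ℝ => u (x + h • q)) (𝓝[>] 0)
      (𝓝 (((L - ⟪p, q⟫) / ‖q‖ : ℝ) : EReal)) := by
    refine EReal.tendsto_coe.2 (((hL.sub_const _).div_const _).congr' ?_)
    filter_upwards [self_mem_nhdsWithin] with h (h0 : 0 < h)
    rw [add_sub_cancel_left, real_inner_smul_right, norm_smul, Real.norm_of_nonneg h0.le,
      div_sub' h0.ne', div_div]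
  have hle : (((L - ⟪p, q⟫) / ‖q‖ : ℝ) : EReal) ≤ 0 := by
    rw [← hray.limsup_eq]
    refine le_trans ?_ hp
    rw [← Function.comp_def, limsup_comp]
    exact limsup_le_limsup_of_le (tendsto_add_smul_nhdsNE x hq)
  have := (div_le_iff₀ hqpos).1 (EReal.coe_nonpos.1 hle)
  linarith

end SuperDiff

/-- envelope theorem, directional derivative part: with
`V(y) = inf_{z∈D} g(y,z)` as in the envelope theorem, for every direction `q`
the one-sided directional derivative `D⁺V(x)(q) = lim_{h→0⁺}(V(x+hq) − V(x))/h`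
exists and equals `min_{y∈Y(x)} ⟪y, q⟫ = min_{p∈D⁺V(x)} ⟪p, q⟫`. -/
theorem stmt7 {K m : ℕ}
    (D : Set (EuclideanSpace ℝ (Fin m))) (hne : D.Nonempty) (hcomp : IsCompact D)
    (x : EuclideanSpace ℝ (Fin K))
    (g : EuclideanSpace ℝ (Fin K) → EuclideanSpace ℝ (Fin m) → ℝ)
    (Dg : EuclideanSpace ℝ (Fin m) → EuclideanSpace ℝ (Fin K))
    (hbdd : ∃ M : ℝ, ∀ y, ∀ z ∈ D, |g y z| ≤ M)
    (hdiff : ∀ ε > (0 : ℝ), ∃ δ > (0 : ℝ), ∀ z ∈ D, ∀ y,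
      ‖y - x‖ < δ → |g y z - g x z - ⟪Dg z, y - x⟫| ≤ ε * ‖y - x‖)
    (hDgcont : ContinuousOn Dg D)
    (hglsc : LowerSemicontinuousOn (fun z => g x z) D)
    (V : EuclideanSpace ℝ (Fin K) → ℝ)
    (hV : ∀ y, V y = sInf ((fun z => g y z) '' D))
    (Pt : Set (EuclideanSpace ℝ (Fin m))) (hPt : Pt = {z ∈ D | V x = g x z})
    (Y : Set (EuclideanSpace ℝ (Fin K))) (hY : Y = Dg '' Pt) :
    ∀ q : EuclideanSpace ℝ (Fin K), ∃ L : ℝ,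
      Tendsto (fun h : ℝ => (V (x + h • q) - V x) / h) (𝓝[>] (0 : ℝ)) (𝓝 L) ∧
      IsLeast ((fun y => ⟪y, q⟫) '' Y) L ∧
      IsLeast ((fun p => ⟪p, q⟫) '' superDiff V x) L := by
  intro q
  subst hPt hY
  obtain ⟨M, hM⟩ := hbdd
  have hglb : ∀ y, IsGLB (g y '' D) (V y) := fun y => hV y ▸ isGLB_csInf (hne.image _)
    ⟨-M, by rintro _ ⟨z, hz, rfl⟩; linarith [(abs_le.1 (hM y z hz)).1]⟩
  have hg : HasUniformGradientAt g Dg D x := fun ε hε => by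
    obtain ⟨δ, hδ, hδx⟩ := hdiff ε hε
    filter_upwards [Metric.ball_mem_nhds x hδ] with y hy z hz
    exact hδx z hz y (by rwa [Metric.mem_ball, dist_eq_norm] at hy)
  obtain ⟨z₀, ⟨hz₀, hz₀V⟩, hmin⟩ := hcomp.exists_isMinOn_setOf_eq hne hglsc (hglb x)
    (hDgcont.inner continuousOn_const : ContinuousOn (fun z => ⟪Dg z, q⟫) D)
  have hlim := hg.tendsto_div hcomp hDgcont hglsc hglb hz₀ hz₀V q fun z hz hzV => hmin ⟨hz, hzV⟩
  have hsuper : ∀ z ∈ D, V x = g x z → Dg z ∈ superDiff V x := fun z hz hzV =>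
    mem_superDiff_of_eventually fun ε hε =>
      hg.eventually_sub_sub_inner_le hz (fun y => (hglb y).1 (mem_image_of_mem _ hz)) hzV hε
  refine ⟨_, hlim, ⟨mem_image_of_mem _ (mem_image_of_mem _ ⟨hz₀, hz₀V⟩), ?_⟩,
    ⟨mem_image_of_mem _ (hsuper z₀ hz₀ hz₀V), ?_⟩⟩
  · rintro _ ⟨_, ⟨z, hz, rfl⟩, rfl⟩
    exact hmin hz
  · rintro _ ⟨p, hp, rfl⟩
    exact le_inner_of_mem_superDiff hp hlim
end

section
/- Let D ⊆ ℝ^K be a nonempty compact set and define V : ℝ^K → ℝ by V(x) = min_{z∈D} (1/2)‖x − z‖², and let P̃_D(x) := {z ∈ D : ‖x − z‖ = infDist(x, D)} be the set of nearest points of D to x. Then for every x ∈ ℝ^K, the superdifferential of V at x satisfies D⁺V(x) = closed convex hull of {x − p : p ∈ P̃_D(x)}. -/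
/-!
`V = ½ infDist(·, D)²` is touched from above at `x` by the paraboloid `½‖· − z‖²` for every
nearest point `z` of `x`, so each `x − z` is a supergradient, with a quadratic error; the
resulting inequality is stable under closed convex hulls. Conversely, moving from `x` in
direction `−v`, the nearest points `w` of `x − tv` give
`V(x − tv) − V(x) ≥ −t⟪x − w, v⟫`, and by compactness they accumulate at a nearest point `z`
of `x`; so a supergradient `p` satisfies `⟪v, p⟫ ≤ ⟪v, x − z⟫` for some such `z`. This holds in
every direction `v`, which by Hahn–Banach separation puts `p` in the closed convex hull.
-/

open Filter Topology Metric
open scoped RealInnerProductSpace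

section NearestPoints

variable {E : Type*} [SeminormedAddCommGroup E]

def nearestPoints (D : Set E) (x : E) : Set E := {z ∈ D | ‖x - z‖ = infDist x D}

variable {D : Set E}

lemma IsCompact.nearestPoints_nonempty (hD : IsCompact D) (hne : D.Nonempty) (x : E) :
    (nearestPoints D x).Nonempty := by
  obtain ⟨z, hz, hdist⟩ := hD.exists_infDist_eq_dist hne x
  exact ⟨z, hz, by rw [hdist, dist_eq_norm]⟩

lemma mem_nearestPoints_of_tendsto {ι : Type*} {l : Filter ι} [l.NeBot] {y w : ι → E} {x z : E}
    (hy : Tendsto y l (𝓝 x)) (hw : Tendsto w l (𝓝 z)) (hz : z ∈ D)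
    (hyw : ∀ i, w i ∈ nearestPoints D (y i)) : z ∈ nearestPoints D x := by
  refine ⟨hz, tendsto_nhds_unique (hy.sub hw).norm ?_⟩
  exact (((continuous_infDist_pt D).tendsto x).comp hy).congr fun i => ((hyw i).2).symm

lemma infDist_le_norm_sub {z : E} (hz : z ∈ D) (x : E) : infDist x D ≤ ‖x - z‖ :=
  dist_eq_norm x z ▸ infDist_le_dist_of_mem hz

lemma IsCompact.sInf_image_half_sq_norm_sub (hD : IsCompact D) (hne : D.Nonempty) (x : E) :
    sInf ((fun z => (1 / 2 : ℝ) * ‖x - z‖ ^ 2) '' D) = 1 / 2 * infDist x D ^ 2 := by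
  obtain ⟨z, hzD, hz⟩ := hD.nearestPoints_nonempty hne x
  refine le_antisymm ?_ (le_csInf (hne.image _) ?_)
  · rw [← hz]
    exact csInf_le ⟨0, by rintro _ ⟨w, -, rfl⟩; positivity⟩ ⟨z, hzD, rfl⟩
  · rintro _ ⟨w, hw, rfl⟩
    dsimp only
    gcongr
    · exact infDist_nonneg
    · exact infDist_le_norm_sub hw x

end NearestPoints

section InnerProductSpace

variable {E : Type*} [NormedAddCommGroup E] [InnerProductSpace ℝ E] {D : Set E}

lemma half_sq_norm_sub_eq (x y z : E) :
    1 / 2 * ‖y - z‖ ^ 2 = ⟪x - z, y - x⟫ + 1 / 2 * ‖y - x‖ ^ 2 + 1 / 2 * ‖x - z‖ ^ 2 := by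
  rw [show y - z = (y - x) + (x - z) by abel, norm_add_sq_real, real_inner_comm]
  ring

lemma half_sq_infDist_sub_le {x z : E} (hz : z ∈ nearestPoints D x) (y : E) :
    1 / 2 * infDist y D ^ 2 - 1 / 2 * infDist x D ^ 2 - ⟪x - z, y - x⟫ ≤ 1 / 2 * ‖y - x‖ ^ 2 := by
  have hy : infDist y D ^ 2 ≤ ‖y - z‖ ^ 2 := by
    gcongr
    · exact infDist_nonneg
    · exact infDist_le_norm_sub hz.1 y
  rw [← hz.2]
  linarith [half_sq_norm_sub_eq x y z]

lemma le_half_sq_infDist_sub {y w : E} (hw : w ∈ nearestPoints D y) (x : E) :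
    ⟪x - w, y - x⟫ + 1 / 2 * ‖y - x‖ ^ 2 ≤ 1 / 2 * infDist y D ^ 2 - 1 / 2 * infDist x D ^ 2 := by
  have hx : infDist x D ^ 2 ≤ ‖x - w‖ ^ 2 := by
    gcongr
    · exact infDist_nonneg
    · exact infDist_le_norm_sub hw.1 x
  rw [← hw.2]
  linarith [half_sq_norm_sub_eq x y w]

lemma forall_le_inner_of_mem_closure_convexHull {ι : Type*} {S : Set E} {a : ι → ℝ} {b : ι → E}
    (hS : ∀ q ∈ S, ∀ i, a i ≤ ⟪q, b i⟫) {p : E} (hp : p ∈ closure (convexHull ℝ S)) (i : ι) :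
    a i ≤ ⟪p, b i⟫ := by
  rw [← closedConvexHull_eq_closure_convexHull] at hp
  refine closedConvexHull_min (fun q hq => hS q hq i) ?_ ?_ hp
  · exact convex_halfSpace_ge (innerₛₗ ℝ |>.flip (b i)).isLinear _
  · exact isClosed_le (continuous_const (y := a i)) (by fun_prop)

lemma half_sq_infDist_sub_le_of_mem_closure_convexHull {x p : E}
    (hp : p ∈ closure (convexHull ℝ ((fun z => x - z) '' nearestPoints D x))) (y : E) :
    1 / 2 * infDist y D ^ 2 - 1 / 2 * infDist x D ^ 2 - ⟪p, y - x⟫ ≤ 1 / 2 * ‖y - x‖ ^ 2 := by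
  have hS : ∀ q ∈ (fun z => x - z) '' nearestPoints D x, ∀ y : E,
      1 / 2 * infDist y D ^ 2 - 1 / 2 * infDist x D ^ 2 - 1 / 2 * ‖y - x‖ ^ 2 ≤ ⟪q, y - x⟫ := by
    rintro _ ⟨z, hz, rfl⟩ y
    linarith [half_sq_infDist_sub_le hz y]
  linarith [forall_le_inner_of_mem_closure_convexHull hS hp y]

lemma mem_closure_convexHull_of_forall_exists_inner_le [CompleteSpace E] {S : Set E} {p : E}
    (h : ∀ v, ∃ q ∈ S, ⟪v, p⟫ ≤ ⟪v, q⟫) : p ∈ closure (convexHull ℝ S) := by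
  rw [← iInter_halfSpaces_eq (convex_convexHull ℝ S).closure isClosed_closure,
    Set.mem_iInter]
  intro l
  obtain ⟨q, hq, hle⟩ := h ((InnerProductSpace.toDual ℝ E).symm l)
  refine ⟨q, subset_closure (subset_convexHull ℝ S hq), ?_⟩
  simpa only [InnerProductSpace.toDual_symm_apply] using hle

end InnerProductSpace

section Superdifferential

variable {K : ℕ} {x p : EuclideanSpace ℝ (Fin K)}

lemma mem_superDiff_iff {V : EuclideanSpace ℝ (Fin K) → ℝ} :
    p ∈ superDiff V x ↔ ∀ ε > 0, ∀ᶠ y in 𝓝 x, V y - V x - ⟪p, y - x⟫ ≤ ε * ‖y - x‖ := by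
  have hquot : ∀ ε : ℝ, (∀ᶠ y in 𝓝[≠] x, (V y - V x - ⟪p, y - x⟫) / ‖y - x‖ ≤ ε) ↔
      ∀ᶠ y in 𝓝 x, V y - V x - ⟪p, y - x⟫ ≤ ε * ‖y - x‖ := by
    intro ε
    rw [eventually_nhdsWithin_iff]
    refine eventually_congr (Eventually.of_forall fun y => ?_)
    rcases eq_or_ne y x with rfl | hyx
    · simp
    · have hpos : 0 < ‖y - x‖ := norm_pos_iff.2 (sub_ne_zero.2 hyx)
      simp only [Set.mem_compl_iff, Set.mem_singleton_iff, hyx, not_false_eq_true,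
        forall_const, div_le_iff₀ hpos]
  rw [superDiff, Set.mem_ofPred_eq, limsup_le_iff]
  constructor
  · intro h ε hε
    rw [← hquot]
    exact (h ε (by exact_mod_cast hε)).mono fun y hy => (EReal.coe_lt_coe_iff.1 hy).le
  · intro h c hc
    obtain ⟨ε, hε, hεc⟩ := EReal.exists_between_coe_real hc
    exact ((hquot ε).2 (h ε (by exact_mod_cast hε))).mono fun y hy =>
      (EReal.coe_le_coe_iff.2 hy).trans_lt hεc

lemma mem_superDiff_of_forall_le_mul_sq {V : EuclideanSpace ℝ (Fin K) → ℝ} (C : ℝ)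
    (h : ∀ y, V y - V x - ⟪p, y - x⟫ ≤ C * ‖y - x‖ ^ 2) : p ∈ superDiff V x := by
  refine mem_superDiff_iff.2 fun ε hε => ?_
  have hlim : Tendsto (fun y => C * ‖y - x‖) (𝓝 x) (𝓝 0) := by
    simpa using ((tendsto_id (x := 𝓝 x)).sub_const x).norm.const_mul C
  filter_upwards [hlim.eventually (eventually_le_nhds hε)] with y hy
  calc V y - V x - ⟪p, y - x⟫ ≤ C * ‖y - x‖ * ‖y - x‖ := by nlinarith [h y]
    _ ≤ ε * ‖y - x‖ := by gcongr

lemma IsCompact.exists_mem_nearestPoints_inner_le_of_mem_superDiff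
    {D : Set (EuclideanSpace ℝ (Fin K))} (hD : IsCompact D) (hne : D.Nonempty)
    (hp : p ∈ superDiff (fun y => 1 / 2 * infDist y D ^ 2) x) (v : EuclideanSpace ℝ (Fin K)) :
    ∃ z ∈ nearestPoints D x, ⟪v, p⟫ ≤ ⟪v, x - z⟫ := by
  set t : ℕ → ℝ := fun n => 1 / (n + 1)
  set y : ℕ → EuclideanSpace ℝ (Fin K) := fun n => x - t n • v
  have hy : Tendsto y atTop (𝓝 x) := by
    simpa [y, t] using (tendsto_const_nhds (x := x)).sub
      ((tendsto_one_div_add_atTop_nhds_zero_nat (𝕜 := ℝ)).smul_const v)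
  choose w hw using fun n => hD.nearestPoints_nonempty hne (y n)
  obtain ⟨z, hzD, φ, hφ, hwz⟩ := hD.tendsto_subseq fun n => (hw n).1
  have hyφ := hy.comp hφ.tendsto_atTop
  refine ⟨z, mem_nearestPoints_of_tendsto hyφ hwz hzD fun k => hw (φ k), ?_⟩
  have hbound : ∀ ε > 0, ⟪v, p⟫ - ⟪v, x - z⟫ ≤ ε * ‖v‖ := by
    intro ε hε
    refine le_of_tendsto (tendsto_const_nhds.sub
      (tendsto_const_nhds.inner (tendsto_const_nhds.sub hwz))) ?_
    filter_upwards [hyφ.eventually (mem_superDiff_iff.1 hp ε hε)] with k hk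
    have hlow := le_half_sq_infDist_sub (hw (φ k)) x
    have ht : 0 < t (φ k) := by positivity
    have hyx : y (φ k) - x = -(t (φ k) • v) := by simp [y]
    simp only [Function.comp_apply, hyx, inner_neg_right, real_inner_smul_right, norm_neg,
      norm_smul, Real.norm_of_nonneg ht.le] at hk hlow ⊢
    rw [real_inner_comm p v, real_inner_comm (x - w (φ k)) v]
    have hsq : 0 ≤ 1 / 2 * (t (φ k) * ‖v‖) ^ 2 := by positivity
    refine le_of_mul_le_mul_left ?_ ht
    linarith
  have hlim : Tendsto (fun ε : ℝ => ε * ‖v‖) (𝓝[>] 0) (𝓝 0) := by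
    simpa using ((tendsto_id (x := 𝓝 (0 : ℝ))).mul_const ‖v‖).mono_left nhdsWithin_le_nhds
  exact sub_nonpos.1 (ge_of_tendsto hlim (eventually_mem_nhdsWithin.mono hbound))

end Superdifferential

/-- for a nonempty compact set `D ⊆ ℝ^K` and
`V(x) = min_{z∈D} (1/2)‖x − z‖²`, the superdifferential of `V` at every `x` is
the closed convex hull of `{x − p : p ∈ P̃_D(x)}`, where `P̃_D(x)` is the set of
nearest points of `D` to `x`. -/
theorem stmt8 {K : ℕ} (D : Set (EuclideanSpace ℝ (Fin K)))
    (hne : D.Nonempty) (hcomp : IsCompact D)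
    (V : EuclideanSpace ℝ (Fin K) → ℝ)
    (hV : ∀ y, V y = sInf ((fun z => (1 / 2 : ℝ) * ‖y - z‖ ^ 2) '' D)) :
    ∀ x : EuclideanSpace ℝ (Fin K),
      superDiff V x =
        closure (convexHull ℝ
          ((fun p => x - p) '' {z ∈ D | ‖x - z‖ = infDist x D})) := by
  intro x
  obtain rfl : V = fun y => 1 / 2 * infDist y D ^ 2 :=
    funext fun y => (hV y).trans (hcomp.sInf_image_half_sq_norm_sub hne y)
  change _ = closure (convexHull ℝ ((fun p => x - p) '' nearestPoints D x))
  refine Set.Subset.antisymm (fun p hp => ?_) (fun p hp => ?_)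
  · refine mem_closure_convexHull_of_forall_exists_inner_le fun v => ?_
    obtain ⟨z, hz, hle⟩ :=
      hcomp.exists_mem_nearestPoints_inner_le_of_mem_superDiff hne hp v
    exact ⟨x - z, Set.mem_image_of_mem _ hz, hle⟩
  · exact mem_superDiff_of_forall_le_mul_sq (1 / 2)
      (half_sq_infDist_sub_le_of_mem_closure_convexHull hp)
end
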